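/- Let Γ be a lattice in H₃(ℝ), let μ be the unique H₃(ℝ)-invariant Borel probability measure on X = H₃(ℝ)/Γ, let ν be the translation-invariant Borel probability measure on the torus ℝ²/p(Γ), and let π : X → ℝ²/p(Γ) be the map induced by p. Then π is measure-preserving and, for f ∈ L²(X,μ), the following are equivalent: (i) for every t ∈ ℝ, f(c(t)·x) = f(x) for μ-a.e. x; (ii) there exists h ∈ L²(ℝ²/p(Γ), ν) with f = h∘π μ-a.e. (That is, π is the ergodic decomposition of the flow (x ↦ c(t)·x)_{t∈ℝ} on X.) -/

import Mathlib

open MeasureTheory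

/-- The real Heisenberg group `H₃(ℝ)`: `ℝ³` with
`(a,b,c)·(a′,b′,c′) = (a+a′, b+b′, c+c′+a·b′)`. -/
@[ext] structure H3 : Type where
  x : ℝ
  y : ℝ
  z : ℝ

namespace H3

instance : Mul H3 := ⟨fun g h => ⟨g.x + h.x, g.y + h.y, g.z + h.z + g.x * h.y⟩⟩
instance : One H3 := ⟨⟨0, 0, 0⟩⟩
instance : Inv H3 := ⟨fun g => ⟨-g.x, -g.y, -g.z + g.x * g.y⟩⟩

@[simp] lemma mul_x (g h : H3) : (g * h).x = g.x + h.x := rfl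
@[simp] lemma mul_y (g h : H3) : (g * h).y = g.y + h.y := rfl
@[simp] lemma mul_z (g h : H3) : (g * h).z = g.z + h.z + g.x * h.y := rfl
@[simp] lemma one_x : (1 : H3).x = 0 := rfl
@[simp] lemma one_y : (1 : H3).y = 0 := rfl
@[simp] lemma one_z : (1 : H3).z = 0 := rfl
@[simp] lemma inv_x (g : H3) : g⁻¹.x = -g.x := rfl
@[simp] lemma inv_y (g : H3) : g⁻¹.y = -g.y := rfl
@[simp] lemma inv_z (g : H3) : g⁻¹.z = -g.z + g.x * g.y := rfl

instance : Group H3 where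
  mul_assoc a b c := by ext <;> simp <;> ring
  one_mul a := by ext <;> simp
  mul_one a := by ext <;> simp
  inv_mul_cancel a := by ext <;> simp

/-- The Euclidean topology on `H₃(ℝ)`. -/
instance : TopologicalSpace H3 :=
  TopologicalSpace.induced (fun g => (g.x, g.y, g.z)) inferInstance

instance : MeasurableSpace H3 := borel H3

/-- `a(t)`. -/
def Ha (t : ℝ) : H3 := ⟨t, 0, 0⟩
/-- `b(t)`. -/
def Hb (t : ℝ) : H3 := ⟨0, t, 0⟩
/-- `c(t)`, the center. -/
def Hc (t : ℝ) : H3 := ⟨0, 0, t⟩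

/-- The projection `p : H₃(ℝ) → ℝ²`. -/
def pmap (g : H3) : ℝ × ℝ := (g.x, g.y)

/-- The kernel of `p`, i.e. the center of `H₃(ℝ)`, as a subgroup. -/
def pKer : Subgroup H3 where
  carrier := {g | g.x = 0 ∧ g.y = 0}
  one_mem' := ⟨rfl, rfl⟩
  mul_mem' := by
    rintro a b ⟨ha1, ha2⟩ ⟨hb1, hb2⟩
    exact ⟨by simp [ha1, hb1], by simp [ha2, hb2]⟩
  inv_mem' := by
    rintro a ⟨ha1, ha2⟩
    exact ⟨by simp [ha1], by simp [ha2]⟩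

/-- A lattice in `H₃(ℝ)`: a discrete subgroup with compact quotient. -/
def IsLattice (Γ : Subgroup H3) : Prop :=
  DiscreteTopology Γ ∧ CompactSpace (H3 ⧸ Γ)

/-- `k_Γ`: the index of the commutator subgroup `[Γ,Γ]` in `Γ ∩ ker p`. -/
noncomputable def kIdx (Γ : Subgroup H3) : ℕ :=
  Subgroup.relIndex ⁅Γ, Γ⁆ (Γ ⊓ pKer)

/-- The integer lattice `ℤ² ⊆ ℝ²`. -/
def intLattice : Set (ℝ × ℝ) := {v | ∃ m n : ℤ, v = ((m : ℝ), (n : ℝ))}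

/-- The action of a `2×2` matrix on `ℝ²`. -/
def matVec (A : Matrix (Fin 2) (Fin 2) ℝ) (v : ℝ × ℝ) : ℝ × ℝ :=
  (A 0 0 * v.1 + A 0 1 * v.2, A 1 0 * v.1 + A 1 1 * v.2)

/-- The dual of a subset of `ℝ²`:
all vectors pairing integrally with every element of `S`. -/
def dualSet (S : Set (ℝ × ℝ)) : Set (ℝ × ℝ) :=
  {v | ∀ w ∈ S, ∃ n : ℤ, v.1 * w.1 + v.2 * w.2 = (n : ℝ)}

end H3

open H3

/-- The image `p(Γ)`, as an additive subgroup of `ℝ²`. -/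
def H3.pSub (Γ : Subgroup H3) : AddSubgroup (ℝ × ℝ) where
  carrier := pmap '' (Γ : Set H3)
  zero_mem' := ⟨1, Γ.one_mem, by simp [pmap]⟩
  add_mem' := by
    rintro _ _ ⟨a, ha, rfl⟩ ⟨b, hb, rfl⟩
    exact ⟨a * b, Γ.mul_mem ha hb, by simp [pmap, Prod.ext_iff]⟩
  neg_mem' := by
    rintro _ ⟨a, ha, rfl⟩
    exact ⟨a⁻¹, Γ.inv_mem ha, by simp [pmap, Prod.ext_iff]⟩

/-- The map `π : H₃(ℝ)/Γ → ℝ²/p(Γ)` induced by `p`. -/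
def H3.piMap (Γ : Subgroup H3) : H3 ⧸ Γ → (ℝ × ℝ) ⧸ pSub Γ :=
  Quotient.map' pmap fun a b hab => by
    rw [QuotientGroup.leftRel_apply] at hab
    rw [QuotientAddGroup.leftRel_apply]
    exact ⟨a⁻¹ * b, hab, by simp [pmap, Prod.ext_iff]⟩

noncomputable instance (Γ : Subgroup H3) : MeasurableSpace (H3 ⧸ Γ) := borel _
noncomputable instance (S : AddSubgroup (ℝ × ℝ)) : MeasurableSpace ((ℝ × ℝ) ⧸ S) := borel _

open MeasureTheory
namespace H3

def toProd : H3 → ℝ × ℝ × ℝ := fun g => (g.x, g.y, g.z)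

lemma isInducing_toProd : Topology.IsInducing toProd := ⟨rfl⟩

lemma isEmbedding_toProd : Topology.IsEmbedding toProd :=
  ⟨isInducing_toProd, fun a b h => by
    simp only [toProd, Prod.mk.injEq] at h; ext <;> tauto⟩

lemma continuous_toProd : Continuous toProd := isInducing_toProd.continuous

lemma continuous_x : Continuous fun g : H3 => g.x := (continuous_fst).comp continuous_toProd
lemma continuous_y : Continuous fun g : H3 => g.y :=
  (continuous_fst.comp continuous_snd).comp continuous_toProd
lemma continuous_z : Continuous fun g : H3 => g.z :=
  (continuous_snd.comp continuous_snd).comp continuous_toProd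

lemma continuous_mk3 {α : Type*} [TopologicalSpace α] {f₁ f₂ f₃ : α → ℝ}
    (h1 : Continuous f₁) (h2 : Continuous f₂) (h3 : Continuous f₃) :
    Continuous fun a => H3.mk (f₁ a) (f₂ a) (f₃ a) := by
  rw [isInducing_toProd.continuous_iff]
  exact (h1.prodMk (h2.prodMk h3))

instance : IsTopologicalGroup H3 where
  continuous_mul := by
    apply continuous_mk3
    · exact (continuous_x.comp continuous_fst).add (continuous_x.comp continuous_snd)
    · exact (continuous_y.comp continuous_fst).add (continuous_y.comp continuous_snd)
    · exact ((continuous_z.comp continuous_fst).add (continuous_z.comp continuous_snd)).add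
        ((continuous_x.comp continuous_fst).mul (continuous_y.comp continuous_snd))
  continuous_inv := by
    apply continuous_mk3
    · exact continuous_x.neg
    · exact continuous_y.neg
    · exact continuous_z.neg.add (continuous_x.mul continuous_y)

instance : SecondCountableTopology H3 := isEmbedding_toProd.secondCountableTopology

instance : BorelSpace H3 := ⟨rfl⟩

lemma continuous_pmap : Continuous pmap := continuous_x.prodMk continuous_y

lemma continuous_Hc : Continuous Hc := continuous_mk3 continuous_const continuous_const continuous_id

@[simp] lemma pmap_mul (g h : H3) : pmap (g * h) = pmap g + pmap h := rfl

@[simp] lemma pmap_Hc (t : ℝ) : pmap (Hc t) = 0 := rfl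

end H3
section S2
open H3
variable {Γ : Subgroup H3}

instance (Γ : Subgroup H3) : BorelSpace (H3 ⧸ Γ) := ⟨rfl⟩
instance (S : AddSubgroup (ℝ × ℝ)) : BorelSpace ((ℝ × ℝ) ⧸ S) := ⟨rfl⟩

lemma piMap_mk (g : H3) : piMap Γ (QuotientGroup.mk g) = QuotientAddGroup.mk (pmap g) := rfl

lemma smul_mk (g h : H3) :
    g • (QuotientGroup.mk h : H3 ⧸ Γ) = QuotientGroup.mk (g * h) := rfl

lemma continuous_piMap : Continuous (piMap Γ) :=
  continuous_coinduced_dom.2 <| by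
    show Continuous (fun g : H3 => piMap Γ (QuotientGroup.mk g))
    simp only [piMap_mk]
    exact continuous_quot_mk.comp continuous_pmap

lemma measurable_piMap : Measurable (piMap Γ) := continuous_piMap.measurable

lemma piMap_smul (g : H3) (x : H3 ⧸ Γ) :
    piMap Γ (g • x) = QuotientAddGroup.mk (pmap g) + piMap Γ x := by
  induction x using QuotientGroup.induction_on with
  | H h => rw [smul_mk, piMap_mk, piMap_mk, pmap_mul]; rfl

lemma piMap_Hc_smul (t : ℝ) (x : H3 ⧸ Γ) : piMap Γ (Hc t • x) = piMap Γ x := by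
  rw [piMap_smul, pmap_Hc]; simp

lemma Hc_smul_of_mem {t : ℝ} (ht : Hc t ∈ Γ) (x : H3 ⧸ Γ) : Hc t • x = x := by
  induction x using QuotientGroup.induction_on with
  | H h =>
    rw [smul_mk]
    have : Hc t * h = h * Hc t := by ext <;> simp [Hc] <;> ring
    rw [this]
    exact QuotientGroup.mk_mul_of_mem h ht

/-- commutator is central -/
lemma commutator_eq (g h : H3) : g * h * g⁻¹ * h⁻¹ = Hc (g.x * h.y - h.x * g.y) := by
  ext <;> simp [Hc] <;> ring

/-- fibers of π are central orbits -/
lemma exists_Hc_of_piMap_eq {x y : H3 ⧸ Γ} (h : piMap Γ x = piMap Γ y) :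
    ∃ t : ℝ, y = Hc t • x := by
  induction x using QuotientGroup.induction_on with
  | H g =>
  induction y using QuotientGroup.induction_on with
  | H k =>
    rw [piMap_mk, piMap_mk] at h
    have h2 : pmap k - pmap g ∈ pSub Γ := (QuotientAddGroup.eq_iff_sub_mem).1 h.symm
    obtain ⟨γ, hγ, hγ2⟩ := h2
    refine ⟨k.z - (g * γ).z, ?_⟩
    rw [smul_mk]
    have hx : k.x = (g * γ).x := by
      have := congrArg Prod.fst hγ2
      simp [pmap] at this ⊢; linarith
    have hy : k.y = (g * γ).y := by
      have := congrArg Prod.snd hγ2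
      simp [pmap] at this ⊢; linarith
    have : k = Hc (k.z - (g * γ).z) * (g * γ) := by
      ext <;> simp [Hc, hx, hy]
    calc (QuotientGroup.mk k : H3 ⧸ Γ)
        = QuotientGroup.mk (Hc (k.z - (g * γ).z) * g * γ) := by rw [mul_assoc, ← this]
      _ = QuotientGroup.mk (Hc (k.z - (g * γ).z) * g) := QuotientGroup.mk_mul_of_mem _ hγ
end S2
section S3
open H3
variable {Γ : Subgroup H3}

/-- No surjective continuous additive character of `H₃(ℝ)` kills a lattice. -/
lemma lattice_no_char (hΓ : IsLattice Γ) (φ : H3 → ℝ)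
    (hadd : ∀ g h : H3, φ (g * h) = φ g + φ h) (hcont : Continuous φ)
    (hker : ∀ γ ∈ Γ, φ γ = 0) (hsurj : Function.Surjective φ) : False := by
  haveI : CompactSpace (H3 ⧸ Γ) := hΓ.2
  set F : H3 ⧸ Γ → ℝ := fun x =>
    Quotient.liftOn' x φ (fun a b hab => by
      rw [QuotientGroup.leftRel_apply] at hab
      have h1 : φ b = φ a + φ (a⁻¹ * b) := by rw [← hadd, mul_inv_cancel_left]
      rw [h1, hker _ hab, add_zero]) with hF
  have hFc : Continuous F := continuous_coinduced_dom.2 hcont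
  have hFs : Function.Surjective F := fun r => by
    obtain ⟨g, hg⟩ := hsurj r; exact ⟨QuotientGroup.mk g, hg⟩
  have hr : Set.range F = Set.univ := hFs.range_eq
  have : IsCompact (Set.univ : Set ℝ) := hr ▸ isCompact_range hFc
  exact this.ne_univ rfl

lemma lattice_exists_det_ne_zero (hΓ : IsLattice Γ) :
    ∃ γ ∈ Γ, ∃ δ ∈ Γ, γ.x * δ.y - δ.x * γ.y ≠ 0 := by
  by_contra hcon
  push_neg at hcon
  by_cases hz : ∃ γ₀ ∈ Γ, ¬(γ₀.x = 0 ∧ γ₀.y = 0)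
  · obtain ⟨γ₀, hγ₀, hne⟩ := hz
    refine lattice_no_char hΓ (fun g => g.x * γ₀.y - γ₀.x * g.y) (fun g h => by simp; ring)
      ((continuous_x.mul continuous_const).sub (continuous_const.mul continuous_y)) (fun γ hγ => hcon γ hγ γ₀ hγ₀) ?_
    intro r
    rcases ne_or_eq γ₀.y 0 with hy | hy
    · exact ⟨Ha (r / γ₀.y), by simp [Ha]; field_simp⟩
    · have hx : γ₀.x ≠ 0 := fun hx => hne ⟨hx, hy⟩
      exact ⟨Hb (-r / γ₀.x), by simp [Hb, hy]; field_simp⟩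
  · push_neg at hz
    refine lattice_no_char hΓ (fun g => g.x) (fun g h => by simp) (by exact continuous_x)
      (fun γ hγ => (hz γ hγ).1) (fun r => ⟨Ha r, rfl⟩)

lemma Hc_add (s t : ℝ) : Hc (s + t) = Hc s * Hc t := by ext <;> simp [Hc]

lemma Hc_neg (t : ℝ) : Hc (-t) = (Hc t)⁻¹ := by ext <;> simp [Hc]

/-- the group of central periods of Γ -/
def centralPeriods (Γ : Subgroup H3) : AddSubgroup ℝ where
  carrier := {t | Hc t ∈ Γ}
  zero_mem' := by have : Hc 0 = 1 := by ext <;> simp [Hc]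
                  simp [Set.mem_setOf_eq, this, Γ.one_mem]
  add_mem' := fun ha hb => by simpa [Set.mem_setOf_eq, Hc_add] using Γ.mul_mem ha hb
  neg_mem' := fun ha => by simpa [Set.mem_setOf_eq, Hc_neg] using Γ.inv_mem ha

lemma det_mem_centralPeriods {γ δ : H3} (hγ : γ ∈ Γ) (hδ : δ ∈ Γ) :
    γ.x * δ.y - δ.x * γ.y ∈ centralPeriods Γ := by
  have : Hc (γ.x * δ.y - δ.x * γ.y) = γ * δ * γ⁻¹ * δ⁻¹ := (commutator_eq γ δ).symm
  show Hc _ ∈ Γ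
  rw [this]
  exact Γ.mul_mem (Γ.mul_mem (Γ.mul_mem hγ hδ) (Γ.inv_mem hγ)) (Γ.inv_mem hδ)

/-- discreteness of Γ isolates central periods -/
lemma exists_eps (hΓ : IsLattice Γ) :
    ∃ ε > 0, ∀ t ∈ centralPeriods Γ, |t| < ε → t = 0 := by
  haveI := hΓ.1
  have hopen : IsOpen ({(1 : Γ)} : Set Γ) := isOpen_discrete _
  rw [isOpen_induced_iff] at hopen
  obtain ⟨U, hU, hU1⟩ := hopen
  have h1U : (1 : H3) ∈ U := by
    have : (1 : Γ) ∈ (Subtype.val ⁻¹' U : Set Γ) := by rw [hU1]; rfl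
    exact this
  have hcont : Continuous Hc := continuous_Hc
  have : IsOpen (Hc ⁻¹' U) := hU.preimage hcont
  have h0 : (0 : ℝ) ∈ Hc ⁻¹' U := by
    have : Hc 0 = 1 := by ext <;> simp [Hc]
    simp [Set.mem_preimage, this, h1U]
  rw [Metric.isOpen_iff] at this
  obtain ⟨ε, hε, hball⟩ := this 0 h0
  refine ⟨ε, hε, fun t ht htε => ?_⟩
  have : Hc t ∈ U := hball (by simpa [Real.dist_eq] using htε)
  have : (⟨Hc t, ht⟩ : Γ) ∈ (Subtype.val ⁻¹' U : Set Γ) := this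
  rw [hU1] at this
  have : Hc t = 1 := congrArg Subtype.val this
  have := congrArg H3.z this
  simpa [Hc] using this

/-- central periods form a nontrivial cyclic group -/
lemma exists_generator (hΓ : IsLattice Γ) :
    ∃ a : ℝ, 0 < a ∧ (∀ t, t ∈ centralPeriods Γ ↔ ∃ n : ℤ, t = n • a) := by
  obtain ⟨ε, hε, hiso⟩ := exists_eps hΓ
  obtain ⟨γ₀, hγ₀, δ₀, hδ₀, hd⟩ := lattice_exists_det_ne_zero hΓ
  have hdmem := det_mem_centralPeriods hγ₀ hδ₀
  rcases AddSubgroup.dense_or_cyclic (centralPeriods Γ) with hdense | ⟨a, ha⟩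
  · exfalso
    obtain ⟨t, htmem, ht⟩ := hdense.exists_mem_open (isOpen_Ioo (a := ε/3) (b := ε/2))
      ⟨(5/12)*ε, by constructor <;> linarith⟩
    have : t = 0 := hiso t htmem (by rw [abs_lt]; constructor <;> linarith [ht.1, ht.2])
    simp [this] at ht; linarith [ht.1]
  · rw [ha] at hdmem ⊢
    have hmem : ∀ t : ℝ, t ∈ AddSubgroup.closure {a} ↔ ∃ n : ℤ, t = n • a := by
      intro t
      rw [AddSubgroup.mem_closure_singleton]
      exact ⟨fun ⟨n, h⟩ => ⟨n, h.symm⟩, fun ⟨n, h⟩ => ⟨n, h.symm⟩⟩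
    have hane : a ≠ 0 := by
      rintro rfl
      obtain ⟨n, hn⟩ := hmem _ |>.1 hdmem
      simp at hn; exact hd hn
    rcases lt_or_gt_of_ne hane with h | h
    · refine ⟨-a, by linarith, fun t => ?_⟩
      rw [hmem]
      exact ⟨fun ⟨n, hh⟩ => ⟨-n, by simp [hh]⟩, fun ⟨n, hh⟩ => ⟨-n, by simp [hh]⟩⟩
    · exact ⟨a, h, hmem⟩

end S3
section S4
open H3
variable {Γ : Subgroup H3}

lemma pSub_isolated (hΓ : IsLattice Γ) :
    ∃ U : Set (ℝ × ℝ), IsOpen U ∧ (0 : ℝ × ℝ) ∈ U ∧ ∀ v ∈ pSub Γ, v ∈ U → v = 0 := by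
  obtain ⟨a, ha, hmem⟩ := exists_generator hΓ
  obtain ⟨γ₀, hγ₀, δ₀, hδ₀, hd⟩ := lattice_exists_det_ne_zero hΓ
  refine ⟨{w : ℝ × ℝ | |w.1 * δ₀.y - δ₀.x * w.2| < a ∧ |w.1 * γ₀.y - γ₀.x * w.2| < a},
    ?_, by simpa using ha, ?_⟩
  · apply IsOpen.inter
    · exact isOpen_lt (Continuous.abs ((continuous_fst.mul continuous_const).sub
        (continuous_const.mul continuous_snd))) continuous_const
    · exact isOpen_lt (Continuous.abs ((continuous_fst.mul continuous_const).sub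
        (continuous_const.mul continuous_snd))) continuous_const
  · rintro v ⟨γ, hγ, rfl⟩ ⟨h1, h2⟩
    have key : ∀ δ ∈ Γ, |γ.x * δ.y - δ.x * γ.y| < a → γ.x * δ.y - δ.x * γ.y = 0 := by
      intro δ hδ habs
      obtain ⟨n, hn⟩ := (hmem _).1 (det_mem_centralPeriods hγ hδ)
      rcases eq_or_ne n 0 with rfl | hne
      · simpa using hn
      · exfalso
        rw [hn] at habs
        have : (1 : ℝ) ≤ |(n : ℝ)| := by
          rw [← Int.cast_abs, ← Int.cast_one, Int.cast_le]
          exact Int.one_le_abs (by simpa using hne)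
        rw [zsmul_eq_mul, abs_mul, abs_of_pos ha] at habs
        nlinarith
    have e1 : γ.x * δ₀.y - δ₀.x * γ.y = 0 := key δ₀ hδ₀ (by simpa [pmap] using h1)
    have e2 : γ.x * γ₀.y - γ₀.x * γ.y = 0 := key γ₀ hγ₀ (by simpa [pmap] using h2)
    have hx : γ.x = 0 := by
      have : γ.x * (γ₀.x * δ₀.y - δ₀.x * γ₀.y) = 0 := by linear_combination γ₀.x * e1 - δ₀.x * e2
      exact (mul_eq_zero.1 this).resolve_right hd
    have hy : γ.y = 0 := by
      have : γ.y * (γ₀.x * δ₀.y - δ₀.x * γ₀.y) = 0 := by linear_combination γ₀.y * e1 - δ₀.y * e2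
      exact (mul_eq_zero.1 this).resolve_right hd
    simp [pmap, hx, hy, Prod.ext_iff]

lemma pSub_discrete (hΓ : IsLattice Γ) : DiscreteTopology (pSub Γ) := by
  obtain ⟨U, hUo, hU0, hU⟩ := pSub_isolated hΓ
  apply discreteTopology_iff_isOpen_singleton_zero.2
  rw [isOpen_induced_iff]
  exact ⟨U, hUo, by
    ext v
    simp only [Set.mem_preimage, Set.mem_singleton_iff]
    constructor
    · intro hv
      exact Subtype.ext (hU v v.2 hv)
    · rintro rfl; exact hU0⟩

/-- the corresponding `ℤ`-submodule -/
noncomputable def pLat (Γ : Subgroup H3) : Submodule ℤ (ℝ × ℝ) :=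
  AddSubgroup.toIntSubmodule (pSub Γ)

lemma mem_pLat {v : ℝ × ℝ} : v ∈ pLat Γ ↔ v ∈ pSub Γ := Iff.rfl

lemma pLat_discrete (hΓ : IsLattice Γ) : DiscreteTopology (pLat Γ) := by
  obtain ⟨U, hUo, hU0, hU⟩ := pSub_isolated hΓ
  apply discreteTopology_iff_isOpen_singleton_zero.2
  rw [isOpen_induced_iff]
  exact ⟨U, hUo, by
    ext v
    simp only [Set.mem_preimage, Set.mem_singleton_iff]
    constructor
    · intro hv
      exact Subtype.ext (hU v v.2 hv)
    · rintro rfl; exact hU0⟩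

lemma pLat_span (hΓ : IsLattice Γ) : Submodule.span ℝ ((pLat Γ : Set (ℝ × ℝ))) = ⊤ := by
  obtain ⟨γ₀, hγ₀, δ₀, hδ₀, hd⟩ := lattice_exists_det_ne_zero hΓ
  rw [eq_top_iff]
  rintro ⟨u, v⟩ -
  have hm1 : pmap γ₀ ∈ Submodule.span ℝ ((pLat Γ : Set (ℝ × ℝ))) :=
    Submodule.subset_span ⟨γ₀, hγ₀, rfl⟩
  have hm2 : pmap δ₀ ∈ Submodule.span ℝ ((pLat Γ : Set (ℝ × ℝ))) :=
    Submodule.subset_span ⟨δ₀, hδ₀, rfl⟩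
  have heq : (u, v) = ((u * δ₀.y - δ₀.x * v) / (γ₀.x * δ₀.y - δ₀.x * γ₀.y)) • pmap γ₀ +
      ((γ₀.x * v - u * γ₀.y) / (γ₀.x * δ₀.y - δ₀.x * γ₀.y)) • pmap δ₀ := by
    have h1 : ((u, v) : ℝ × ℝ).1 = u := rfl
    apply Prod.ext <;> · show _ = _ ; simp only [Prod.fst_add, Prod.snd_add, Prod.smul_fst, Prod.smul_snd, pmap, smul_eq_mul]; rw [div_mul_eq_mul_div, div_mul_eq_mul_div, ← add_div, eq_div_iff hd]; ring
  rw [heq]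
  exact Submodule.add_mem _ (Submodule.smul_mem _ _ hm1) (Submodule.smul_mem _ _ hm2)

lemma pLat_isZLattice (hΓ : IsLattice Γ) :
    letI := pLat_discrete hΓ
    IsZLattice ℝ (pLat Γ) := by
  letI := pLat_discrete hΓ
  exact ⟨pLat_span hΓ⟩

/-- A measurable section of the torus. -/
lemma exists_section (hΓ : IsLattice Γ) :
    ∃ σ : ((ℝ × ℝ) ⧸ pSub Γ) → ℝ × ℝ, Measurable σ ∧
      ∀ y, QuotientAddGroup.mk (σ y) = y := by
  haveI := pLat_discrete hΓ
  haveI := pSub_discrete hΓ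
  haveI := pLat_isZLattice hΓ
  haveI : Module.Finite ℤ (pLat Γ) := ZLattice.module_finite ℝ (pLat Γ)
  haveI : IsClosed ((pSub Γ : Set (ℝ × ℝ))) := AddSubgroup.isClosed_of_discrete
  haveI : T2Space ((ℝ × ℝ) ⧸ pSub Γ) := by infer_instance
  let b₀ := Module.Free.chooseBasis ℤ (pLat Γ)
  let bR := Module.Basis.ofZLatticeBasis ℝ (pLat Γ) b₀
  have hspan : Submodule.span ℤ (Set.range ⇑bR) = pLat Γ := Module.Basis.ofZLatticeBasis_span ℝ (pLat Γ) b₀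
  set F : Set (ℝ × ℝ) := ZSpan.fundamentalDomain bR with hFdef
  have hFmeas : MeasurableSet F := ZSpan.fundamentalDomain_measurableSet bR
  set q : ℝ × ℝ → ((ℝ × ℝ) ⧸ pSub Γ) := QuotientAddGroup.mk with hq
  have hqcont : Continuous q := continuous_quot_mk
  have hinj : Set.InjOn q F := by
    intro v hv w hw hvw
    have hsub : -v + w ∈ pSub Γ := by
      rw [hq] at hvw
      have := (QuotientAddGroup.eq (s := pSub Γ)).1 hvw
      exact this
    have : ZSpan.fract bR v = ZSpan.fract bR w := by
      rw [ZSpan.fract_eq_fract]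
      rw [hspan]
      exact hsub
    rwa [ZSpan.fract_eq_self.2 hv, ZSpan.fract_eq_self.2 hw] at this
  have hsurj : ∀ y, ∃ v : F, q v = y := by
    intro y
    obtain ⟨w, rfl⟩ := QuotientAddGroup.mk_surjective y
    refine ⟨⟨ZSpan.fract bR w, ZSpan.fract_mem_fundamentalDomain bR w⟩, ?_⟩
    show q _ = _
    rw [hq, QuotientAddGroup.eq]
    have : w - ZSpan.fract bR w ∈ Submodule.span ℤ (Set.range ⇑bR) := by
      rw [ZSpan.fract]
      simp only [sub_sub_cancel]
      exact (ZSpan.floor bR w).2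
    rw [hspan] at this
    have h2 : -(ZSpan.fract bR w) + w ∈ pSub Γ := by
      rw [neg_add_eq_sub]
      exact this
    exact h2
  have ME : MeasurableEmbedding (F.restrict q) :=
    ContinuousOn.measurableEmbedding hFmeas hqcont.continuousOn hinj
  have hbij : Function.Bijective (F.restrict q) := by
    constructor
    · intro v w h
      exact Subtype.ext (hinj v.2 w.2 h)
    · intro y
      obtain ⟨v, hv⟩ := hsurj y
      exact ⟨v, hv⟩
  let e := Equiv.ofBijective _ hbij
  let E : F ≃ᵐ ((ℝ × ℝ) ⧸ pSub Γ) :=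
    { toEquiv := e
      measurable_toFun := ME.measurable
      measurable_invFun := by
        intro A hA
        have him : e.symm ⁻¹' A = (F.restrict q) '' A := by
          rw [← Equiv.image_eq_preimage_symm]
          rfl
        rw [him]
        exact ME.measurableSet_image' hA }
  refine ⟨fun y => (E.symm y : ℝ × ℝ), measurable_subtype_coe.comp E.symm.measurable, fun y => ?_⟩
  have : (F.restrict q) (E.symm y) = y := e.apply_symm_apply y
  exact this
end S4
section S5
open H3 MeasureTheory
variable {Γ : Subgroup H3}

set_option synthInstance.maxHeartbeats 1000000 in
lemma unique_inv_measure {S : AddSubgroup (ℝ × ℝ)} (m n : Measure ((ℝ × ℝ) ⧸ S))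
    [IsProbabilityMeasure m] [IsProbabilityMeasure n]
    (hm : ∀ y : (ℝ × ℝ) ⧸ S, Measure.map (fun t => y + t) m = m)
    (hn : ∀ y : (ℝ × ℝ) ⧸ S, Measure.map (fun t => y + t) n = n) : m = n := by
  have hadd : Measurable (fun p : ((ℝ × ℝ) ⧸ S) × ((ℝ × ℝ) ⧸ S) => p.1 + p.2) :=
    continuous_add.measurable
  ext A hA
  have h1 : Measure.map (fun p : ((ℝ × ℝ) ⧸ S) × ((ℝ × ℝ) ⧸ S) => p.1 + p.2) (m.prod n) A
      = n A := by
    rw [Measure.map_apply hadd hA, Measure.prod_apply (hadd hA)]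
    have : ∀ x : (ℝ × ℝ) ⧸ S,
        n (Prod.mk x ⁻¹' ((fun p : ((ℝ × ℝ) ⧸ S) × ((ℝ × ℝ) ⧸ S) => p.1 + p.2) ⁻¹' A)) = n A := by
      intro x
      have : Prod.mk x ⁻¹' ((fun p : ((ℝ × ℝ) ⧸ S) × ((ℝ × ℝ) ⧸ S) => p.1 + p.2) ⁻¹' A)
          = (fun t => x + t) ⁻¹' A := rfl
      rw [this, ← Measure.map_apply (by exact (continuous_const.add continuous_id).measurable) hA,
        hn x]
    simp only [this]
    simp
  have h2 : Measure.map (fun p : ((ℝ × ℝ) ⧸ S) × ((ℝ × ℝ) ⧸ S) => p.1 + p.2) (m.prod n) A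
      = m A := by
    rw [Measure.map_apply hadd hA, Measure.prod_apply_symm (hadd hA)]
    have : ∀ y : (ℝ × ℝ) ⧸ S,
        m ((fun x => (x, y)) ⁻¹' ((fun p : ((ℝ × ℝ) ⧸ S) × ((ℝ × ℝ) ⧸ S) => p.1 + p.2) ⁻¹' A))
        = m A := by
      intro y
      have : ((fun x => (x, y)) ⁻¹' ((fun p : ((ℝ × ℝ) ⧸ S) × ((ℝ × ℝ) ⧸ S) => p.1 + p.2) ⁻¹' A))
          = (fun t => y + t) ⁻¹' A := by
        ext x; simp [add_comm]
      rw [this, ← Measure.map_apply (by exact (continuous_const.add continuous_id).measurable) hA,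
        hm y]
    simp only [this]
    simp
  rw [← h1, h2]

lemma measurable_const_smul_quot (g : H3) : Measurable (fun x : H3 ⧸ Γ => g • x) :=
  (continuous_const_smul g).measurable

lemma map_piMap_eq
    (μ : Measure (H3 ⧸ Γ)) [IsProbabilityMeasure μ]
    (hμ : ∀ g : H3, Measure.map (fun x => g • x) μ = μ)
    (ν : Measure ((ℝ × ℝ) ⧸ pSub Γ)) [IsProbabilityMeasure ν]
    (hν : ∀ v : ℝ × ℝ, Measure.map (fun t => QuotientAddGroup.mk v + t) ν = ν) :
    Measure.map (piMap Γ) μ = ν := by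
  haveI : IsProbabilityMeasure (Measure.map (piMap Γ) μ) :=
    Measure.isProbabilityMeasure_map measurable_piMap.aemeasurable
  apply unique_inv_measure
  · intro y
    obtain ⟨v, rfl⟩ := QuotientAddGroup.mk_surjective y
    set g : H3 := ⟨v.1, v.2, 0⟩ with hg
    have hpg : pmap g = v := rfl
    have hcomp : (fun t => (QuotientAddGroup.mk v : (ℝ × ℝ) ⧸ pSub Γ) + t) ∘ (piMap Γ)
        = (piMap Γ) ∘ (fun x => g • x) := by
      funext x
      show QuotientAddGroup.mk v + piMap Γ x = piMap Γ (g • x)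
      rw [piMap_smul, hpg]
    rw [Measure.map_map (by exact (continuous_add_left _).measurable)
      measurable_piMap, hcomp,
      ← Measure.map_map measurable_piMap (measurable_const_smul_quot g), hμ g]
  · intro y
    obtain ⟨v, rfl⟩ := QuotientAddGroup.mk_surjective y
    exact hν v
end S5
set_option maxHeartbeats 1000000 in
set_option synthInstance.maxHeartbeats 1000000 in
/-- `π : H₃(ℝ)/Γ → ℝ²/p(Γ)` is measure preserving, and an `L²` function is invariant
under the central flow iff it factors through `π` (i.e. `π` is the ergodic
decomposition of the central flow). -/
theorem central_flow_ergodic_decomposition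
    (Γ : Subgroup H3) (hΓ : IsLattice Γ)
    (μ : Measure (H3 ⧸ Γ)) [IsProbabilityMeasure μ]
    (hμ : ∀ g : H3, Measure.map (fun x => g • x) μ = μ)
    (ν : Measure ((ℝ × ℝ) ⧸ pSub Γ)) [IsProbabilityMeasure ν]
    (hν : ∀ v : ℝ × ℝ, Measure.map (fun t => QuotientAddGroup.mk v + t) ν = ν) :
    Measure.map (piMap Γ) μ = ν ∧
    ∀ f : Lp ℂ 2 μ,
      ((∀ t : ℝ, ∀ᵐ x ∂μ, f (Hc t • x) = f x) ↔
        ∃ h : Lp ℂ 2 ν, ∀ᵐ x ∂μ, f x = h (piMap Γ x)) := by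
  have hmapeq : Measure.map (piMap Γ) μ = ν := map_piMap_eq μ hμ ν hν
  obtain ⟨a, ha, hmema⟩ := exists_generator hΓ
  have haΓ : Hc a ∈ Γ := (hmema a).2 ⟨1, by simp⟩
  refine ⟨hmapeq, fun f => ⟨?_, ?_⟩⟩
  · -- invariant implies factors
    intro hinv
    have hfm : StronglyMeasurable (⇑f) := Lp.stronglyMeasurable f
    have hact : Continuous fun p : (H3 ⧸ Γ) × ℝ => Hc p.2 • p.1 :=
      continuous_smul.comp ((continuous_Hc.comp continuous_snd).prodMk continuous_fst)
    set P : (H3 ⧸ Γ) × ℝ → ℂ := fun p => f (Hc p.2 • p.1) with hP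
    have hG : StronglyMeasurable P := hfm.comp_measurable hact.measurable
    set I : Measure ℝ := volume.restrict (Set.Ioc 0 a) with hI
    set Af : (H3 ⧸ Γ) → ℂ := fun x => a⁻¹ • ∫ t in (0:ℝ)..a, f (Hc t • x) with hAf
    have hIoc : ∀ x : H3 ⧸ Γ, (∫ t in (0:ℝ)..a, f (Hc t • x)) = ∫ t, P (x, t) ∂I := fun x =>
      intervalIntegral.integral_of_le ha.le
    have hAfm : Measurable Af := by
      have : Af = fun x => a⁻¹ • ∫ t, P (x, t) ∂I := funext fun x => by
        simp only [hAf]; rw [hIoc x]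
      rw [this]
      exact (hG.integral_prod_right' (ν := I)).measurable.const_smul a⁻¹
    have hper : ∀ x : H3 ⧸ Γ, Function.Periodic (fun t => f (Hc t • x)) a := by
      intro x t
      simp only
      rw [Hc_add, mul_smul, Hc_smul_of_mem haΓ]
    have hAfinv : ∀ (s : ℝ) (x : H3 ⧸ Γ), Af (Hc s • x) = Af x := by
      intro s x
      have h1 : ∀ t : ℝ, Hc t • Hc s • x = Hc (t + s) • x := by
        intro t; rw [← mul_smul, ← Hc_add]
      rw [hAf]
      simp only [h1]
      congr 1
      calc ∫ t in (0:ℝ)..a, f (Hc (t + s) • x)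
          = ∫ t in (0+s:ℝ)..(a+s), f (Hc t • x) :=
            intervalIntegral.integral_comp_add_right (fun u => (f (Hc u • x) : ℂ)) s
        _ = ∫ t in s..(s+a), f (Hc t • x) := by rw [zero_add, add_comm a s]
        _ = ∫ t in (0:ℝ)..(0+a), f (Hc t • x) := (hper x).intervalIntegral_add_eq s 0
        _ = ∫ t in (0:ℝ)..a, f (Hc t • x) := by rw [zero_add]
    -- a.e. equality of Af and f
    have hAe : ∀ᵐ x ∂μ, Af x = f x := by
      have hEm : MeasurableSet {p : (H3 ⧸ Γ) × ℝ | ¬ P p = f p.1} :=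
        (measurableSet_eq_fun hG.measurable (hfm.measurable.comp measurable_fst)).compl
      have hprod : (μ.prod I) {p : (H3 ⧸ Γ) × ℝ | ¬ P p = f p.1} = 0 := by
        rw [Measure.prod_apply_symm hEm]
        have hz : ∀ t : ℝ, μ ((fun x => (x, t)) ⁻¹' {p : (H3 ⧸ Γ) × ℝ | ¬ P p = f p.1}) = 0 := by
          intro t
          have : ((fun x => (x, t)) ⁻¹' {p : (H3 ⧸ Γ) × ℝ | ¬ P p = f p.1})
              = {x | ¬ f (Hc t • x) = f x} := rfl
          rw [this, ← ae_iff]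
          exact hinv t
        simp only [hz]
        simp
      have hae2 : ∀ᵐ p ∂(μ.prod I), P p = f p.1 := by
        rw [ae_iff]; exact hprod
      have hae3 : ∀ᵐ x ∂μ, ∀ᵐ t ∂I, f (Hc t • x) = f x := Measure.ae_ae_of_ae_prod hae2
      filter_upwards [hae3] with x hx
      have : (∫ t in (0:ℝ)..a, f (Hc t • x)) = ∫ t, (f x : ℂ) ∂I := by
        rw [hIoc x]
        exact integral_congr_ae hx
      rw [hAf]
      simp only
      rw [this, integral_const]
      rw [hI]
      simp only [measureReal_def, Measure.restrict_apply_univ, Real.volume_Ioc, sub_zero,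
        ENNReal.toReal_ofReal ha.le]
      rw [smul_smul]
      rw [inv_mul_cancel₀ ha.ne']
      rw [one_smul]
    -- descend to the torus
    obtain ⟨σ, hσm, hσ⟩ := exists_section hΓ
    set s2 : ℝ × ℝ → H3 := fun v => ⟨v.1, v.2, 0⟩ with hs2
    have hs2m : Measurable s2 :=
      (continuous_mk3 continuous_fst continuous_snd continuous_const).measurable
    set h₀ : ((ℝ × ℝ) ⧸ pSub Γ) → ℂ := fun y => Af (QuotientGroup.mk (s2 (σ y))) with hh₀
    have hmk : Measurable (QuotientGroup.mk : H3 → H3 ⧸ Γ) :=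
      QuotientGroup.continuous_mk.measurable
    have hh₀m : Measurable h₀ :=
      hAfm.comp (hmk.comp (hs2m.comp hσm))
    have hkey : ∀ x : H3 ⧸ Γ, h₀ (piMap Γ x) = Af x := by
      intro x
      have hπ : piMap Γ (QuotientGroup.mk (s2 (σ (piMap Γ x)))) = piMap Γ x := by
        rw [piMap_mk]
        show QuotientAddGroup.mk (σ (piMap Γ x)) = piMap Γ x
        exact hσ _
      obtain ⟨t, ht⟩ := exists_Hc_of_piMap_eq hπ.symm
      rw [hh₀]
      simp only
      rw [ht, hAfinv]
    have hfaem : ∀ᵐ x ∂μ, h₀ (piMap Γ x) = f x := by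
      filter_upwards [hAe] with x hx
      rw [hkey x, hx]
    have hmem : MemLp h₀ 2 ν := by
      rw [← hmapeq]
      refine (memLp_map_measure_iff hh₀m.aestronglyMeasurable
        measurable_piMap.aemeasurable).2 ?_
      refine MemLp.ae_eq ?_ (Lp.memLp f)
      filter_upwards [hfaem] with x hx
      show (f x : ℂ) = (h₀ ∘ piMap Γ) x
      exact hx.symm
    refine ⟨hmem.toLp h₀, ?_⟩
    have h1 : ∀ᵐ y ∂ν, hmem.toLp h₀ y = h₀ y := hmem.coeFn_toLp
    have h1' : ∀ᵐ y ∂(Measure.map (piMap Γ) μ), hmem.toLp h₀ y = h₀ y := by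
      rw [hmapeq]; exact h1
    have h2 : ∀ᵐ x ∂μ, hmem.toLp h₀ (piMap Γ x) = h₀ (piMap Γ x) :=
      ae_of_ae_map measurable_piMap.aemeasurable h1'
    filter_upwards [hfaem, h2] with x hx1 hx2
    rw [hx2, hx1]
  · -- factors implies invariant
    rintro ⟨h, hae⟩ t
    have hset : MeasurableSet {x : H3 ⧸ Γ | ¬ f x = h (piMap Γ x)} :=
      (measurableSet_eq_fun (Lp.stronglyMeasurable f).measurable
        ((Lp.stronglyMeasurable h).measurable.comp measurable_piMap)).compl
    have hpre : ∀ᵐ x ∂μ, f (Hc t • x) = h (piMap Γ (Hc t • x)) := by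
      have h0 : μ {x | ¬ f x = h (piMap Γ x)} = 0 := by
        rw [← ae_iff]; exact hae
      rw [ae_iff]
      have heq : {x | ¬ f (Hc t • x) = h (piMap Γ (Hc t • x))}
          = (fun x : H3 ⧸ Γ => Hc t • x) ⁻¹' {x | ¬ f x = h (piMap Γ x)} := rfl
      rw [heq, ← Measure.map_apply (measurable_const_smul_quot (Hc t)) hset, hμ (Hc t)]
      exact h0
    filter_upwards [hpre, hae] with x h1 h2
    rw [h1, piMap_Hc_smul, ← h2]
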